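/- arXiv:1811.03019 — 4 statements merged into one kernel-verified Lean document; each statement's English description precedes it below -/
import Mathlib

section
/- Let {v, b₁, …, bₙ} be an orthonormal basis of ℝ^{n+1}. Then for every (x₁, …, xₙ) ∈ ℝⁿ, the distance from the point v to the subspace spanned by {b₁ + x₁·v, …, bₙ + xₙ·v} equals 1/√(1 + Σᵢ xᵢ²). -/
open scoped RealInnerProductSpace


/-- The orthogonal projection of `v` onto the span of `S`. -/
noncomputable def projSpan {m : ℕ} (S : Set (EuclideanSpace ℝ (Fin m)))
    (v : EuclideanSpace ℝ (Fin m)) : EuclideanSpace ℝ (Fin m) :=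
  (Submodule.orthogonalProjection (Submodule.span ℝ S) v : EuclideanSpace ℝ (Fin m))

/-- `dist(v, ⟨S⟩) = ‖v − proj_{⟨S⟩}(v)‖`. -/
noncomputable def distSpan {m : ℕ} (v : EuclideanSpace ℝ (Fin m))
    (S : Set (EuclideanSpace ℝ (Fin m))) : ℝ :=
  ‖v - projSpan S v‖

/-- Lemma 2: If `{v, b₁, …, bₙ}` is an orthonormal basis of `ℝ^{n+1}`, then
the distance of `v` from the subspace spanned by `{bᵢ + xᵢ·v}ᵢ` is `1/√(1 + Σᵢ xᵢ²)`. -/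
theorem mdsp_dist_orthonormal (n : ℕ) (v : EuclideanSpace ℝ (Fin (n+1)))
    (b : Fin n → EuclideanSpace ℝ (Fin (n+1)))
    (h : Orthonormal ℝ (Fin.cons v b : Fin (n+1) → EuclideanSpace ℝ (Fin (n+1))))
    (x : Fin n → ℝ) :
    distSpan v (Set.range fun i => b i + x i • v) =
      1 / Real.sqrt (1 + ∑ i, (x i) ^ 2) := by
  have hinner := orthonormal_iff_ite.mp h
  have hvv : ⟪v, v⟫ = 1 := by simpa using hinner 0 0
  have hvb : ∀ i, ⟪v, b i⟫ = 0 := fun i => by simpa [Fin.cons_succ, (Fin.succ_ne_zero i).symm] using hinner 0 i.succ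
  have hbv : ∀ i, ⟪b i, v⟫ = 0 := fun i => by rw [real_inner_comm]; exact hvb i
  have hbb : ∀ i j, ⟪b i, b j⟫ = if i = j then 1 else 0 := fun i j => by
    simpa [Fin.cons_succ, Fin.succ_inj] using hinner i.succ j.succ
  set s : ℝ := ∑ i, (x i) ^ 2 with hs
  have hspos : (0:ℝ) < 1 + s := by positivity
  set K := Submodule.span ℝ (Set.range fun i => b i + x i • v) with hK
  set p : EuclideanSpace ℝ (Fin (n+1)) := (1+s)⁻¹ • ∑ i, x i • (b i + x i • v) with hp
  have hpmem : p ∈ K := by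
    refine K.smul_mem _ (Submodule.sum_mem _ fun i _ => K.smul_mem _ ?_)
    exact Submodule.subset_span ⟨i, rfl⟩
  have hgen : ∀ j, ⟪v - p, b j + x j • v⟫ = 0 := by
    intro j
    have h1 : ⟪v, b j + x j • v⟫ = x j := by
      rw [inner_add_right, real_inner_smul_right, hvb j, hvv]; ring
    have h2 : ∀ i, ⟪b i + x i • v, b j + x j • v⟫ = (if i = j then 1 else 0) + x i * x j := by
      intro i
      rw [inner_add_left, inner_add_right, inner_add_right, real_inner_smul_left,
        real_inner_smul_left, real_inner_smul_right, real_inner_smul_right,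
        hbb i j, hbv i, hvb j, hvv]
      ring
    have key : ∑ i, x i * ((if i = j then (1:ℝ) else 0) + x i * x j) = x j * (1 + s) := by
      have hterm : ∀ i ∈ Finset.univ, x i * ((if i = j then (1:ℝ) else 0) + x i * x j)
          = (if i = j then x j else 0) + x j * x i ^ 2 := by
        intro i _; by_cases hij : i = j <;> simp [hij] <;> ring
      rw [Finset.sum_congr rfl hterm, Finset.sum_add_distrib, ← Finset.mul_sum, ← hs,
        Finset.sum_ite_eq' Finset.univ j fun _ => x j]
      simp; ring
    have h3 : ⟪p, b j + x j • v⟫ = x j := by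
      rw [hp, real_inner_smul_left, sum_inner]
      simp only [real_inner_smul_left, h2]
      rw [key]
      field_simp
    rw [inner_sub_left, h1, h3, sub_self]
  have hproj : (Submodule.orthogonalProjection K v : EuclideanSpace ℝ (Fin (n+1))) = p := by
    rw [← Submodule.starProjection_apply]
    refine Submodule.eq_starProjection_of_mem_of_inner_eq_zero hpmem ?_
    intro w hw
    induction hw using Submodule.span_induction with
    | mem w hw => obtain ⟨j, rfl⟩ := hw; exact hgen j
    | zero => simp
    | add w₁ w₂ _ _ h1 h2 => rw [inner_add_right, h1, h2, add_zero]
    | smul c w _ hw => rw [real_inner_smul_right, hw, mul_zero]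
  set w : EuclideanSpace ℝ (Fin (n+1)) := ∑ i, x i • b i with hw
  have hvp : v - p = (1+s)⁻¹ • (v - w) := by
    have hsum : ∑ i, x i • (b i + x i • v) = w + s • v := by
      rw [hw, hs, Finset.sum_smul, ← Finset.sum_add_distrib]
      exact Finset.sum_congr rfl fun i _ => by rw [smul_add, smul_smul, sq]
    rw [hp, hsum]
    have h1 : (1:ℝ) + s ≠ 0 := hspos.ne'
    match_scalars <;> field_simp <;> ring
  have hvw : ⟪v, w⟫ = 0 := by
    rw [hw, inner_sum]
    simp only [real_inner_smul_right, hvb, mul_zero, Finset.sum_const_zero]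
  have hwv : ⟪w, v⟫ = 0 := by rw [real_inner_comm]; exact hvw
  have hww : ⟪w, w⟫ = s := by
    rw [hs]
    nth_rewrite 1 [hw]
    rw [sum_inner]
    refine Finset.sum_congr rfl fun i _ => ?_
    rw [real_inner_smul_left, hw, inner_sum]
    simp only [real_inner_smul_right, hbb, mul_ite, mul_one, mul_zero,
      Finset.sum_ite_eq, Finset.mem_univ, if_true]
    rw [sq]
  have hnorm2 : ‖v - w‖^2 = 1 + s := by
    rw [← real_inner_self_eq_norm_sq, inner_sub_left, inner_sub_right, inner_sub_right,
      hvv, hvw, hwv, hww]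
    ring
  have hnorm : ‖v - w‖ = Real.sqrt (1 + s) := by
    rw [← Real.sqrt_sq (norm_nonneg _), hnorm2]
  have hd : distSpan v (Set.range fun i => b i + x i • v) = ‖v - p‖ := by
    simp only [distSpan, projSpan]
    exact congrArg (fun z => ‖v - z‖) hproj
  rw [hd, hvp, norm_smul, hnorm, Real.norm_eq_abs, abs_of_pos (by positivity),
    eq_div_iff (by positivity), mul_assoc, Real.mul_self_sqrt hspos.le,
    inv_mul_cancel₀ hspos.ne']
end

section
/- Let v, b₁, …, bₙ ∈ ℝ^{n+1} be linearly independent, let B = {b₁, …, bₙ}, let p = ‖proj_{⟨B⟩}(v)‖, and fix an index i with αᵢ = ⟨v, bᵢ⟩/‖v‖². If x ∈ ℝ satisfies ‖proj_{span{bᵢ + x·v}}(v)‖ ≤ p, then |x + αᵢ| < ‖bᵢ‖/(‖v‖ − p). -/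
open scoped RealInnerProductSpace

/-- With `p = ‖proj_{⟨B⟩}(v)‖` and `αᵢ = ⟨v,bᵢ⟩/‖v‖²`, if `x ∈ ℝ` satisfies
`‖proj_{span{bᵢ + x·v}}(v)‖ ≤ p`, then `|x + αᵢ| < ‖bᵢ‖/(‖v‖ − p)`. -/
theorem mdsp_single_range_bound (n : ℕ) (v : EuclideanSpace ℝ (Fin (n+1)))
    (b : Fin n → EuclideanSpace ℝ (Fin (n+1)))
    (hli : LinearIndependent ℝ (Fin.cons v b : Fin (n+1) → EuclideanSpace ℝ (Fin (n+1))))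
    (p : ℝ) (hp : p = ‖projSpan (Set.range b) v‖)
    (i : Fin n) (αi : ℝ) (hαi : αi = ⟪v, b i⟫ / ‖v‖ ^ 2)
    (x : ℝ)
    (hx : ‖projSpan {b i + x • v} v‖ ≤ p) :
    |x + αi| < ‖b i‖ / (‖v‖ - p) := by
  obtain ⟨hbli, hvs⟩ := linearIndependent_fin_cons.mp hli
  have hv0 : v ≠ 0 := by
    have := hli.ne_zero 0
    simpa using this
  have hvnorm : (0:ℝ) < ‖v‖ := norm_pos_iff.mpr hv0
  have hbi0 : b i ≠ 0 := hbli.ne_zero i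
  have hbi : (0:ℝ) < ‖b i‖ := norm_pos_iff.mpr hbi0
  set S := Submodule.span ℝ (Set.range b) with hS
  have hp0 : 0 ≤ p := hp ▸ norm_nonneg _
  -- p < ‖v‖
  have hperp : (Submodule.orthogonalProjection Sᗮ v : EuclideanSpace ℝ (Fin (n+1))) ≠ 0 := by
    intro h
    apply hvs
    have h2 : (Submodule.orthogonalProjection S v : EuclideanSpace ℝ (Fin (n+1))) + (Submodule.orthogonalProjection Sᗮ v : EuclideanSpace ℝ (Fin (n+1))) = v :=
      Submodule.starProjection_add_starProjection_orthogonal (K := S) v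
    rw [h, add_zero] at h2
    exact h2 ▸ (Submodule.orthogonalProjection S v).2
  have hperp' : (0:ℝ) < ‖(Submodule.orthogonalProjection Sᗮ v : EuclideanSpace ℝ (Fin (n+1)))‖ :=
    norm_pos_iff.mpr hperp
  have hpyth : ‖v‖ ^ 2 = p ^ 2 + ‖(Submodule.orthogonalProjection Sᗮ v : EuclideanSpace ℝ (Fin (n+1)))‖ ^ 2 := by
    rw [hp]
    simpa [projSpan, Submodule.coe_norm] using Submodule.norm_sq_eq_add_norm_sq_projection v S
  have hpv : p < ‖v‖ := by
    nlinarith [hpyth, hperp', hp0, norm_nonneg v]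
  -- w ≠ 0
  set w : EuclideanSpace ℝ (Fin (n+1)) := b i + x • v with hw
  have hw0 : w ≠ 0 := by
    intro h
    rw [hw] at h
    rcases eq_or_ne x 0 with hx0 | hx0
    · apply hbi0
      simpa [hx0] using h
    · apply hvs
      have hbx : b i = (-x) • v := by
        rw [neg_smul]
        exact eq_neg_of_add_eq_zero_left h
      have hveq : v = (-x)⁻¹ • b i := by
        rw [hbx, smul_smul, inv_mul_cancel₀ (by simpa using hx0), one_smul]
      rw [hveq]
      exact Submodule.smul_mem _ _ (Submodule.subset_span (Set.mem_range_self i))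
  have hwn : (0:ℝ) < ‖w‖ := norm_pos_iff.mpr hw0
  -- projection norm formula
  have hproj : ‖projSpan {w} v‖ = |⟪w, v⟫| / ‖w‖ := by
    rw [projSpan, ← Submodule.starProjection_apply, Submodule.starProjection_singleton]
    simp only [RCLike.ofReal_real_eq_id, id_eq]
    rw [norm_smul, Real.norm_eq_abs, abs_div,
      abs_of_nonneg (by positivity : (0:ℝ) ≤ ‖w‖ ^ 2)]
    field_simp
  -- inner product computation
  have hinner : ⟪w, v⟫ = (x + αi) * ‖v‖ ^ 2 := by
    rw [hw, inner_add_left, real_inner_smul_left, real_inner_self_eq_norm_sq,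
      real_inner_comm, hαi]
    field_simp
    ring
  have hkey : |x + αi| * ‖v‖ ^ 2 ≤ p * ‖w‖ := by
    have := hx
    rw [hproj, hinner, abs_mul, abs_of_nonneg (by positivity : (0:ℝ) ≤ ‖v‖^2),
      div_le_iff₀ hwn] at this
    linarith
  -- bound ‖w‖
  set u : EuclideanSpace ℝ (Fin (n+1)) := b i - αi • v with hu
  have huv : ⟪u, v⟫ = 0 := by
    rw [hu, inner_sub_left, real_inner_smul_left, real_inner_self_eq_norm_sq,
      real_inner_comm, hαi]
    field_simp
    simp
  have hub : ‖u‖ ≤ ‖b i‖ := by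
    have hbieq : b i = u + αi • v := by rw [hu]; abel
    have h2 := norm_add_sq_real u (αi • v)
    rw [real_inner_smul_right, huv, mul_zero, norm_smul, ← hbieq] at h2
    nlinarith [norm_nonneg u, norm_nonneg (b i), sq_nonneg (‖αi‖ * ‖v‖)]
  have hwb : ‖w‖ ≤ ‖b i‖ + |x + αi| * ‖v‖ := by
    have hweq : w = u + (x + αi) • v := by
      rw [hw, hu]
      module
    calc ‖w‖ = ‖u + (x + αi) • v‖ := by rw [hweq]
    _ ≤ ‖u‖ + ‖(x + αi) • v‖ := norm_add_le _ _
    _ = ‖u‖ + |x + αi| * ‖v‖ := by rw [norm_smul, Real.norm_eq_abs]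
    _ ≤ ‖b i‖ + |x + αi| * ‖v‖ := by linarith
  -- conclude
  rw [lt_div_iff₀ (by linarith : (0:ℝ) < ‖v‖ - p)]
  nlinarith [abs_nonneg (x + αi), hkey, hwb, mul_le_mul_of_nonneg_left hwb hp0]
end

section
/- Let v, b₁, …, bₙ ∈ ℤ^{n+1} be linearly independent. Let b₁*, …, bₙ* be the Gram–Schmidt orthogonalization of b₁, …, bₙ, for 1 ≤ k ≤ n let d_k = det(B_kᵀ·B_k) where B_k is the matrix with columns b₁, …, b_k (i.e. d_k is the square of the k-dimensional volume of the parallelepiped formed by b₁, …, b_k), let D = Π_{k=1}^n d_k, and let E = D²·Π_{i=1}^n ‖bᵢ*‖². Then the distance d = dist(v, ⟨{b₁, …, bₙ}⟩) satisfies E·d² ≥ 1. -/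
open scoped RealInnerProductSpace
open Matrix
open InnerProductSpace

lemma myPosDef {m k : ℕ} (A : Matrix (Fin m) (Fin k) ℝ)
    (h : ∀ x, A.mulVec x = 0 → x = 0) : (Aᵀ * A).PosDef := by
  refine Matrix.PosDef.of_dotProduct_mulVec_pos ?_ ?_
  · have := Matrix.isHermitian_conjTranspose_mul_self A
    simpa [Matrix.conjTranspose, Matrix.transpose_map, star] using this
  · intro x hx
    have h1 : star x ⬝ᵥ (Aᵀ * A) *ᵥ x = (A *ᵥ x) ⬝ᵥ (A *ᵥ x) := by
      rw [← Matrix.mulVec_mulVec, Matrix.dotProduct_mulVec, Matrix.vecMul_transpose]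
      simp
    rw [h1]
    have h2 : A *ᵥ x ≠ 0 := fun h0 => hx (h x h0)
    have := dotProduct_self_eq_zero (v := A *ᵥ x)
    have nn : 0 ≤ (A *ᵥ x) ⬝ᵥ (A *ᵥ x) :=
      Finset.sum_nonneg fun i _ => mul_self_nonneg _
    rcases nn.lt_or_eq with h3 | h3
    · exact h3
    · exact absurd (this.1 h3.symm) h2

lemma myDetCast {k : ℕ} (N : Matrix (Fin k) (Fin k) ℤ)
    (h : (0:ℝ) < (N.map (Int.cast : ℤ → ℝ)).det) :
    (1:ℝ) ≤ (N.map (Int.cast : ℤ → ℝ)).det := by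
  have hc : (N.map (Int.cast : ℤ → ℝ)).det = ((N.det : ℤ) : ℝ) := by
    rw [show N.map (Int.cast : ℤ → ℝ) = (Int.castRingHom ℝ).mapMatrix N from rfl,
      ← RingHom.map_det]; rfl
  rw [hc] at h ⊢
  exact_mod_cast (by exact_mod_cast h : 0 < N.det)

/-- The real vector corresponding to an integer vector. -/
noncomputable def toR {m : ℕ} (x : Fin m → ℤ) : EuclideanSpace ℝ (Fin m) :=
  WithLp.toLp 2 fun i => (x i : ℝ)

/-- The `(n+1) × (k+1)` matrix `B_{k+1}` with columns `b₁, …, b_{k+1}` (for `k : Fin n`). -/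
noncomputable def colMat {n : ℕ} (b : Fin n → Fin (n+1) → ℤ) (k : Fin n) :
    Matrix (Fin (n+1)) (Fin ((k : ℕ) + 1)) ℝ :=
  Matrix.of fun r c => (b (Fin.castLE k.isLt c) r : ℝ)

/-- For linearly independent integer vectors `v, b₁, …, bₙ ∈ ℤ^{n+1}`, with
`b₁*, …, bₙ*` the Gram–Schmidt orthogonalization of `b₁, …, bₙ`, `dₖ = det(Bₖᵀ·Bₖ)`,
`D = Πₖ dₖ` and `E = D²·Πᵢ ‖bᵢ*‖²`, the distance `d = dist(v, ⟨{b₁,…,bₙ}⟩)` satisfies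
`E·d² ≥ 1`. -/
theorem mdsp_dist_lower_bound (n : ℕ) (v : Fin (n+1) → ℤ) (b : Fin n → Fin (n+1) → ℤ)
    (hli : LinearIndependent ℝ (Fin.cons (toR v) (fun i => toR (b i)) : Fin (n+1) → _))
    (bstar : Fin n → EuclideanSpace ℝ (Fin (n+1)))
    (hbstar : ∀ i, bstar i = toR (b i) -
      ∑ j ∈ Finset.Iio i, (⟪toR (b i), bstar j⟫ / ‖bstar j‖ ^ 2) • bstar j)
    (d : Fin n → ℝ) (hd : ∀ k, d k = ((colMat b k).transpose * colMat b k).det)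
    (D : ℝ) (hD : D = ∏ k, d k)
    (E : ℝ) (hE : E = D ^ 2 * ∏ i, ‖bstar i‖ ^ 2) :
    E * distSpan (toR v) (Set.range fun i => toR (b i)) ^ 2 ≥ 1 := by
  classical
  have instW : WellFoundedLT (Fin (n+1)) := inferInstanceAs (WellFoundedLT (Fin (n+1)))
  set c : Fin (n+1) → EuclideanSpace ℝ (Fin (n+1)) :=
    Fin.snoc (fun i => toR (b i)) (toR v) with hc_def
  -- linear independence of c
  have hc : LinearIndependent ℝ c := by
    have hcomp : c = (Fin.cons (toR v) (fun i => toR (b i)) : Fin (n+1) → _) ∘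
        (finRotate (n+1)) := by
      funext p
      induction p using Fin.lastCases with
      | last => simp [hc_def, finRotate_succ_apply, Fin.last_add_one]
      | cast j =>
        simp [hc_def, finRotate_succ_apply, Fin.coeSucc_eq_succ]
    rw [hcomp]
    exact hli.comp _ (Equiv.injective _)
  set g : Fin (n+1) → EuclideanSpace ℝ (Fin (n+1)) := gramSchmidt ℝ c with hg_def
  have hgn : ∀ i, g i ≠ 0 := fun i => gramSchmidt_ne_zero i hc
  -- bstar agrees with gramSchmidt
  have hIio : ∀ i : Fin n, Finset.Iio (Fin.castSucc i)
      = (Finset.Iio i).map ⟨Fin.castSucc, Fin.castSucc_injective n⟩ := by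
    intro i
    ext k
    simp only [Finset.mem_Iio, Finset.mem_map, Function.Embedding.coeFn_mk]
    constructor
    · intro hk
      have hk' : (k : ℕ) < n := by
        have := hk
        rw [Fin.lt_def] at this
        simp only [Fin.coe_castSucc] at this
        omega
      refine ⟨⟨(k : ℕ), hk'⟩, ?_, ?_⟩
      · rw [Fin.lt_def] at hk ⊢
        simpa using hk
      · ext; simp
    · rintro ⟨j, hj, rfl⟩
      rw [Fin.lt_def] at hj ⊢
      simpa using hj
  have key : ∀ (i : Fin n), (∀ j, j < i → bstar j = g (Fin.castSucc j)) →
      bstar i = g (Fin.castSucc i) := by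
    intro i ih
    have hci : c (Fin.castSucc i) = toR (b i) := by simp [hc_def]
    rw [hbstar i, hg_def, gramSchmidt_def ℝ c (Fin.castSucc i), hci]
    congr 1
    rw [hIio i, Finset.sum_map]
    apply Finset.sum_congr rfl
    intro j hj
    have hj' : j < i := Finset.mem_Iio.mp hj
    simp only [Function.Embedding.coeFn_mk]
    rw [Submodule.starProjection_singleton, ← hg_def, ← ih j hj', real_inner_comm]
    norm_num
  have hbgm : ∀ m : ℕ, ∀ i : Fin n, (i : ℕ) ≤ m → bstar i = g (Fin.castSucc i) := by
    intro m
    induction m with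
    | zero =>
      intro i hi
      refine key i fun j hj => absurd (Fin.lt_def.mp hj) (by omega)
    | succ m ihm =>
      intro i hi
      refine key i fun j hj => ihm j ?_
      have := Fin.lt_def.mp hj
      omega
  have hbg : ∀ i : Fin n, bstar i = g (Fin.castSucc i) := fun i => hbgm n i i.isLt.le
  -- product of squared norms is ≥ 1
  have hcard : Module.finrank ℝ (EuclideanSpace ℝ (Fin (n+1))) = Fintype.card (Fin (n+1)) := by
    simp [finrank_euclideanSpace]
  have hprodge : (1:ℝ) ≤ ∏ i : Fin (n+1), ‖g i‖ ^ 2 := by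
    set f : OrthonormalBasis (Fin (n+1)) ℝ (EuclideanSpace ℝ (Fin (n+1))) :=
      gramSchmidtOrthonormalBasis hcard c with hf_def
    have hfc : ∀ i, ⟪f i, c i⟫ = ‖g i‖ := by
      intro i
      have hne : gramSchmidtNormed ℝ c i ≠ 0 := by
        rw [gramSchmidtNormed]
        exact smul_ne_zero (by simpa using hgn i) (hgn i)
      rw [hf_def, gramSchmidtOrthonormalBasis_apply hcard hne, gramSchmidtNormed]
      have hinner : ⟪gramSchmidt ℝ c i, c i⟫ = ‖g i‖ ^ 2 := by
        nth_rewrite 1 [gramSchmidt_def' ℝ c i]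
        rw [inner_add_right, inner_sum]
        have hzero : ∀ j ∈ Finset.Iio i,
            ⟪gramSchmidt ℝ c i, ((Submodule.span ℝ {gramSchmidt ℝ c j}).starProjection (c i))⟫ = 0 := by
          intro j hj
          rw [Submodule.starProjection_singleton, real_inner_smul_right,
            gramSchmidt_orthogonal ℝ c (ne_of_gt (Finset.mem_Iio.mp hj)), mul_zero]
        rw [Finset.sum_eq_zero hzero, add_zero, real_inner_self_eq_norm_sq]
      rw [real_inner_smul_left, hinner]
      rw [sq, ← mul_assoc]
      simp [← hg_def, inv_mul_cancel₀ (norm_ne_zero_iff.mpr (hgn i))]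
    -- the integer matrix with rows c
    set Mint : Matrix (Fin (n+1)) (Fin (n+1)) ℤ :=
      Matrix.of fun p r => (Fin.snoc b v : Fin (n+1) → Fin (n+1) → ℤ) p r with hMint
    set M : Matrix (Fin (n+1)) (Fin (n+1)) ℝ := Mint.map (Int.cast : ℤ → ℝ) with hM
    have hMc : ∀ p r, M p r = c p r := by
      intro p r
      induction p using Fin.lastCases with
      | last => simp [hM, hMint, hc_def, toR]
      | cast j => simp [hM, hMint, hc_def, toR]
    set A : Matrix (Fin (n+1)) (Fin (n+1)) ℝ := f.toBasis.toMatrix c with hA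
    have hGA : M * Mᵀ = Aᵀ * A := by
      ext p q
      rw [Matrix.mul_apply, Matrix.mul_apply]
      have hL : ∑ r, M p r * Mᵀ r q = ⟪c p, c q⟫ := by
        rw [show (⟪c p, c q⟫ : ℝ) = ∑ r, c p r * c q r from by
          simp [PiLp.inner_apply, RCLike.inner_apply, starRingEnd_apply, mul_comm]]
        exact Finset.sum_congr rfl fun r _ => by rw [Matrix.transpose_apply, hMc, hMc]
      have hR : ∑ i, Aᵀ p i * A i q = ⟪c p, c q⟫ := by
        have hps := f.sum_inner_mul_inner (c p) (c q)
        rw [← hps]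
        refine Finset.sum_congr rfl fun i _ => ?_
        rw [Matrix.transpose_apply, hA, Module.Basis.toMatrix_apply, Module.Basis.toMatrix_apply,
          OrthonormalBasis.coe_toBasis_repr_apply, OrthonormalBasis.coe_toBasis_repr_apply,
          OrthonormalBasis.repr_apply_apply, OrthonormalBasis.repr_apply_apply,
          real_inner_comm (f i) (c p)]
      rw [hL, hR]
    have hdetA : A.det = ∏ i, ‖g i‖ := by
      rw [hA, ← Module.Basis.det_apply, gramSchmidtOrthonormalBasis_det]
      exact Finset.prod_congr rfl fun i _ => hfc i
    have hdetG : (M * Mᵀ).det = ∏ i : Fin (n+1), ‖g i‖ ^ 2 := by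
      rw [hGA, Matrix.det_mul, Matrix.det_transpose, hdetA, ← Finset.prod_mul_distrib]
      exact Finset.prod_congr rfl fun i _ => (sq ‖g i‖).symm
    -- integer determinant is nonzero
    have hMdet : M.det = ((Mint.det : ℤ) : ℝ) := by
      rw [hM, show Mint.map (Int.cast : ℤ → ℝ) = (Int.castRingHom ℝ).mapMatrix Mint from rfl,
        ← RingHom.map_det]
      rfl
    have hMdetne : Mint.det ≠ 0 := by
      have hrows : LinearIndependent ℝ (fun p => M p) := by
        have hMc' : (fun p => M p) = fun p => (c p : Fin (n+1) → ℝ) := by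
          funext p; funext r; exact hMc p r
        rw [hMc']
        exact hc.map' (WithLp.linearEquiv 2 ℝ (Fin (n+1) → ℝ)).toLinearMap (LinearEquiv.ker _)
      have hunit : IsUnit M := Matrix.linearIndependent_rows_iff_isUnit.mp hrows
      have hdetne : M.det ≠ 0 := (Matrix.isUnit_iff_isUnit_det M).mp hunit |>.ne_zero
      intro h0
      rw [hMdet, h0] at hdetne
      simp at hdetne
    have hge : (1:ℝ) ≤ (M * Mᵀ).det := by
      rw [Matrix.det_mul, Matrix.det_transpose, hMdet, ← Int.cast_mul]
      have h1 : (1:ℤ) ≤ Mint.det * Mint.det := by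
        rcases hMdetne.lt_or_gt with h | h
        · nlinarith
        · nlinarith
      exact_mod_cast h1
    rw [← hdetG]
    exact hge
  -- distance equals last gramSchmidt norm
  have hdist : distSpan (toR v) (Set.range fun i => toR (b i)) = ‖g (Fin.last n)‖ := by
    have hIioLast : Set.Iio (Fin.last n) = Set.range Fin.castSucc := by
      ext k
      simp only [Set.mem_Iio, Set.mem_range]
      constructor
      · intro hk; exact Fin.exists_castSucc_eq.mpr (ne_of_lt hk)
      · rintro ⟨j, rfl⟩; exact Fin.castSucc_lt_last j
    have hcIio : c '' Set.Iio (Fin.last n) = Set.range fun i => toR (b i) := by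
      rw [hIioLast, ← Set.range_comp]
      apply congrArg
      funext j
      simp [hc_def]
    have hspan : Submodule.span ℝ (g '' Set.Iio (Fin.last n))
        = Submodule.span ℝ (Set.range fun i => toR (b i)) := by
      rw [hg_def, span_gramSchmidt_Iio ℝ c (Fin.last n), hcIio]
    have hclast : c (Fin.last n) = toR v := by simp [hc_def]
    have hmem : toR v - g (Fin.last n)
        ∈ Submodule.span ℝ (Set.range fun i => toR (b i)) := by
      rw [← hspan]
      have h2 := gramSchmidt_def ℝ c (Fin.last n)
      rw [hclast] at h2
      have h3 : toR v - g (Fin.last n) = ∑ i ∈ Finset.Iio (Fin.last n),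
          ((Submodule.span ℝ {gramSchmidt ℝ c i}).starProjection (toR v)) := by
        rw [hg_def, h2]; abel
      rw [h3]
      refine Submodule.sum_mem _ fun j hj => ?_
      have hj' : j < Fin.last n := Finset.mem_Iio.mp hj
      have hle : Submodule.span ℝ {gramSchmidt ℝ c j}
          ≤ Submodule.span ℝ (g '' Set.Iio (Fin.last n)) := by
        apply Submodule.span_mono
        intro x hx
        rw [Set.mem_singleton_iff] at hx
        exact ⟨j, hj', hx.symm⟩
      exact hle (Submodule.starProjection_apply_mem _ _)
    have hgperp : ∀ x ∈ Submodule.span ℝ (g '' Set.Iio (Fin.last n)),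
        ⟪g (Fin.last n), x⟫ = 0 := by
      intro x hx
      induction hx using Submodule.span_induction with
      | mem x hx =>
        obtain ⟨j, hj, rfl⟩ := hx
        exact gramSchmidt_orthogonal ℝ c (ne_of_gt hj)
      | zero => exact inner_zero_right _
      | add x y _ _ hx hy => rw [inner_add_right, hx, hy, add_zero]
      | smul a x _ hx => rw [real_inner_smul_right, hx, mul_zero]
    have hperp : ∀ w ∈ Submodule.span ℝ (Set.range fun i => toR (b i)),
        ⟪toR v - (toR v - g (Fin.last n)), w⟫ = 0 := by
      intro w hw
      have hw' : w ∈ Submodule.span ℝ (g '' Set.Iio (Fin.last n)) := by rwa [hspan]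
      have hsimp : toR v - (toR v - g (Fin.last n)) = g (Fin.last n) := by abel
      rw [hsimp]
      exact hgperp w hw'
    have hproj := Submodule.eq_starProjection_of_mem_of_inner_eq_zero hmem hperp
    rw [distSpan, show projSpan _ (toR v) = _ from hproj]
    congr 1
    abel
  -- D ≥ 1
  have hlib : LinearIndependent ℝ (fun i : Fin n => toR (b i)) := by
    have h1 := hli.comp Fin.succ (Fin.succ_injective _)
    have h2 : (Fin.cons (toR v) (fun i => toR (b i)) : Fin (n+1) → _) ∘ Fin.succ
        = fun i : Fin n => toR (b i) := by
      funext j; simp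
    rwa [h2] at h1
  have hD1 : (1:ℝ) ≤ D := by
    rw [hD]
    have hdk : ∀ k : Fin n, (1:ℝ) ≤ d k := ?_
    · calc (1:ℝ) = ∏ _k : Fin n, 1 := by simp
        _ ≤ ∏ k, d k := Finset.prod_le_prod (fun _ _ => zero_le_one) (fun k _ => hdk k)
    intro k
    set A0 : Matrix (Fin (n+1)) (Fin ((k:ℕ)+1)) ℤ :=
      Matrix.of fun r j => b (Fin.castLE k.isLt j) r with hA0
    have hAmap : colMat b k = A0.map (Int.cast : ℤ → ℝ) := rfl
    have hsub : LinearIndependent ℝ (fun j : Fin ((k:ℕ)+1) => toR (b (Fin.castLE k.isLt j))) :=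
      hlib.comp (Fin.castLE k.isLt) (Fin.castLE_injective _)
    have hinj : ∀ x, (A0.map (Int.cast : ℤ → ℝ)).mulVec x = 0 → x = 0 := by
      intro x hx
      have hsum : ∑ j, x j • toR (b (Fin.castLE k.isLt j)) = 0 := by
        ext r
        have hr := congrFun hx r
        simp only [Matrix.mulVec, dotProduct, Matrix.map_apply, Matrix.of_apply,
          Pi.zero_apply] at hr
        show (∑ j, x j • toR (b (Fin.castLE k.isLt j))) r = 0
        rw [show ((∑ j, x j • toR (b (Fin.castLE k.isLt j))) r)
            = ∑ j, x j * (b (Fin.castLE k.isLt j) r : ℝ) from by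
          rw [WithLp.ofLp_sum, Finset.sum_apply]; rfl]
        rw [← hr]
        exact Finset.sum_congr rfl fun j _ => mul_comm _ _
      funext j
      exact Fintype.linearIndependent_iff.mp hsub x hsum j
    have hpd := myPosDef (A0.map (Int.cast : ℤ → ℝ)) hinj
    have hmapmul : (A0.map (Int.cast : ℤ → ℝ))ᵀ * A0.map (Int.cast : ℤ → ℝ)
        = (A0ᵀ * A0).map (Int.cast : ℤ → ℝ) := by
      ext p q
      simp only [Matrix.mul_apply, Matrix.map_apply, Matrix.transpose_apply]
      push_cast
      rfl
    have hpos : (0:ℝ) < ((A0ᵀ * A0).map (Int.cast : ℤ → ℝ)).det := by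
      rw [← hmapmul]; exact hpd.det_pos
    have := myDetCast _ hpos
    rw [hd k, hAmap, hmapmul]
    exact this
  -- conclude
  have hsplit : (∏ i : Fin n, ‖bstar i‖ ^ 2) *
      distSpan (toR v) (Set.range fun i => toR (b i)) ^ 2
      = ∏ i : Fin (n+1), ‖g i‖ ^ 2 := by
    rw [hdist, Fin.prod_univ_castSucc]
    congr 1
    exact Finset.prod_congr rfl fun i _ => by rw [hbg i]
  have : E * distSpan (toR v) (Set.range fun i => toR (b i)) ^ 2
      = D ^ 2 * ∏ i : Fin (n+1), ‖g i‖ ^ 2 := by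
    rw [hE, mul_assoc, hsplit]
  rw [ge_iff_le, this]
  have hD2 : (1:ℝ) ≤ D ^ 2 := one_le_pow₀ hD1
  nlinarith
end

section
/- Let v, b₁, …, bₙ ∈ ℝ^{n+1} be linearly independent and let B = {b₁, …, bₙ}. Fix an index i, let Bⁱ = B \ {bᵢ}, let v'' = v − proj_{⟨Bⁱ⟩}(v) and b''ᵢ = bᵢ − proj_{⟨Bⁱ⟩}(bᵢ). Suppose α ∈ ℤ satisfies |⟨v'', b''ᵢ − α·v''⟩|/‖b''ᵢ − α·v''‖ ≤ |⟨v'', b''ᵢ − j·v''⟩|/‖b''ᵢ − j·v''‖ for every j ∈ ℤ. Then, setting B' = Bⁱ ∪ {bᵢ − α·v}, one has ‖proj_{⟨B'⟩}(v)‖ ≤ ‖proj_{⟨B⟩}(v)‖ and dist(v, ⟨B'⟩) ≥ dist(v, ⟨B⟩). -/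
open scoped RealInnerProductSpace

variable {m : ℕ}

/-- Key formula: squared distance to `W ⊔ span{w}`. -/
lemma dist_sq_sup_span (W : Submodule ℝ (EuclideanSpace ℝ (Fin m))) (v w : EuclideanSpace ℝ (Fin m))
    (hw : w - (Submodule.orthogonalProjection W w : EuclideanSpace ℝ (Fin m)) ≠ 0) :
    ‖v - (Submodule.orthogonalProjection (W ⊔ Submodule.span ℝ {w}) v : EuclideanSpace ℝ (Fin m))‖^2 =
      ‖v - (Submodule.orthogonalProjection W v : EuclideanSpace ℝ (Fin m))‖^2 -
        ⟪v - (Submodule.orthogonalProjection W v : EuclideanSpace ℝ (Fin m)),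
          w - (Submodule.orthogonalProjection W w : EuclideanSpace ℝ (Fin m))⟫^2 /
        ‖w - (Submodule.orthogonalProjection W w : EuclideanSpace ℝ (Fin m))‖^2 := by
  set v' : EuclideanSpace ℝ (Fin m) := ↑(Submodule.orthogonalProjection W v) with hv'
  set u : EuclideanSpace ℝ (Fin m) := w - ↑(Submodule.orthogonalProjection W w) with hu
  have hu2 : (0:ℝ) < ‖u‖^2 := by have := norm_pos_iff.mpr hw; positivity
  set c : ℝ := ⟪v - v', u⟫ / ‖u‖^2 with hc
  set K := W ⊔ Submodule.span ℝ {w} with hK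
  have hWK : W ≤ K := le_sup_left
  have hproj : (Submodule.orthogonalProjection K v : EuclideanSpace ℝ (Fin m)) = v' + c • u := by
    apply Submodule.eq_starProjection_of_mem_of_inner_eq_zero
    · apply K.add_mem (hWK (Submodule.orthogonalProjection W v).2)
      apply K.smul_mem
      have hwK : w ∈ K := Submodule.mem_sup_right (Submodule.mem_span_singleton_self w)
      exact K.sub_mem hwK (hWK (Submodule.orthogonalProjection W w).2)
    · intro y hy
      rcases Submodule.mem_sup.mp hy with ⟨a, ha, z, hz, rfl⟩
      rcases Submodule.mem_span_singleton.mp hz with ⟨t, rfl⟩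
      have h1 : v - (v' + c • u) = (v - v') - c • u := by abel
      have hvW : ∀ x ∈ W, ⟪v - v', x⟫ = 0 := fun x hx => Submodule.starProjection_inner_eq_zero v x hx
      have huW : ∀ x ∈ W, ⟪u, x⟫ = 0 := fun x hx => Submodule.starProjection_inner_eq_zero w x hx
      have hwu : (w : EuclideanSpace ℝ (Fin m)) = u + Submodule.orthogonalProjection W w := by
        simp [hu]
      rw [h1, hwu]
      have e1 : ⟪v - v' - c • u, a⟫ = 0 := by
        rw [inner_sub_left, hvW a ha, inner_smul_left, huW a ha]; ring
      have e2 : ⟪v - v' - c • u, u⟫ = 0 := by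
        rw [inner_sub_left, inner_smul_left, real_inner_self_eq_norm_sq, hc, conj_trivial]
        field_simp
        ring
      have e3 : ⟪v - v' - c • u, (Submodule.orthogonalProjection W w : EuclideanSpace ℝ (Fin m))⟫ = 0 := by
        rw [inner_sub_left, hvW _ (Submodule.orthogonalProjection W w).2, inner_smul_left,
          huW _ (Submodule.orthogonalProjection W w).2]; ring
      rw [inner_add_right, inner_smul_right, inner_add_right, e1, e2, e3]; ring
  rw [hproj]
  have h2 : v - (v' + c • u) = (v - v') - c • u := by abel
  rw [h2, norm_sub_sq_real, inner_smul_right, norm_smul, mul_pow, Real.norm_eq_abs, sq_abs, hc]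
  field_simp
  ring


lemma pythagoras_projSpan {m : ℕ} (S : Set (EuclideanSpace ℝ (Fin m)))
    (v : EuclideanSpace ℝ (Fin m)) :
    ‖projSpan S v‖^2 = ‖v‖^2 - ‖v - projSpan S v‖^2 := by
  have h : ⟪v - projSpan S v, projSpan S v⟫ = 0 :=
    Submodule.starProjection_inner_eq_zero v _ (Submodule.orthogonalProjection (Submodule.span ℝ S) v).2
  have hv : v = projSpan S v + (v - projSpan S v) := by abel
  have := norm_add_sq_real (projSpan S v) (v - projSpan S v)
  rw [← hv] at this
  rw [real_inner_comm] at h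
  rw [h] at this
  linarith


set_option maxHeartbeats 1000000 in
/-- Correctness of one step of the heuristic algorithm. With
`Bⁱ = B \ {bᵢ}`, `v'' = v − proj_{⟨Bⁱ⟩}(v)`, `b''ᵢ = bᵢ − proj_{⟨Bⁱ⟩}(bᵢ)`, if `α ∈ ℤ`
minimizes `|⟨v'', b''ᵢ − j·v''⟩|/‖b''ᵢ − j·v''‖` over `j ∈ ℤ`, then replacing `bᵢ` by
`bᵢ − α·v` does not increase the projection of `v` and does not decrease its distance. -/
theorem mdsp_heuristic_step (n : ℕ) (v : EuclideanSpace ℝ (Fin (n+1)))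
    (b : Fin n → EuclideanSpace ℝ (Fin (n+1)))
    (hli : LinearIndependent ℝ (Fin.cons v b : Fin (n+1) → EuclideanSpace ℝ (Fin (n+1))))
    (i : Fin n)
    (v'' b''i : EuclideanSpace ℝ (Fin (n+1)))
    (hv'' : v'' = v - projSpan (Set.range b \ {b i}) v)
    (hb''i : b''i = b i - projSpan (Set.range b \ {b i}) (b i))
    (α : ℤ)
    (hα : ∀ j : ℤ, |⟪v'', b''i - (α : ℝ) • v''⟫| / ‖b''i - (α : ℝ) • v''‖ ≤
      |⟪v'', b''i - (j : ℝ) • v''⟫| / ‖b''i - (j : ℝ) • v''‖) :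
    ‖projSpan ((Set.range b \ {b i}) ∪ {b i - (α : ℝ) • v}) v‖ ≤
        ‖projSpan (Set.range b) v‖ ∧
      distSpan v (Set.range b) ≤
        distSpan v ((Set.range b \ {b i}) ∪ {b i - (α : ℝ) • v}) := by
  classical
  obtain ⟨hb, hvs⟩ := linearIndependent_fin_cons.mp hli
  set W : Submodule ℝ (EuclideanSpace ℝ (Fin (n+1))) :=
    Submodule.span ℝ (Set.range b \ {b i}) with hW
  have hWle : W ≤ Submodule.span ℝ (Set.range b) :=
    Submodule.span_mono Set.diff_subset
  -- b i ∉ W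
  have hrange : Set.range b \ {b i} = b '' ({i}ᶜ) := by
    ext x
    simp only [Set.mem_diff, Set.mem_range, Set.mem_singleton_iff, Set.mem_image,
      Set.mem_compl_iff]
    constructor
    · rintro ⟨⟨j, rfl⟩, hne⟩
      exact ⟨j, fun h => hne (by rw [h]), rfl⟩
    · rintro ⟨j, hj, rfl⟩
      exact ⟨⟨j, rfl⟩, fun h => hj (hb.injective h)⟩
  have hbiW : b i ∉ W := by
    rw [hW, hrange]
    exact hb.notMem_span_image (by simp)
  have hvW : v ∉ Submodule.span ℝ (Set.range b) := hvs
  -- nonzero conditions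
  have hb''ne : b''i ≠ 0 := by
    intro h
    apply hbiW
    have : b i = projSpan (Set.range b \ {b i}) (b i) := by
      have := hb''i.symm.trans h; rwa [sub_eq_zero] at this
    rw [this]
    exact (Submodule.orthogonalProjection W (b i)).2
  -- projection of b i - α v onto W
  have hlin : (b i - (α : ℝ) • v) - projSpan (Set.range b \ {b i}) (b i - (α : ℝ) • v) =
      b''i - (α : ℝ) • v'' := by
    rw [hb''i, hv'']
    unfold projSpan
    rw [map_sub, map_smul]
    push_cast
    module
  have hb''αne : b''i - (α : ℝ) • v'' ≠ 0 := by
    intro h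
    rw [h] at hlin
    have hmem : b i - (α : ℝ) • v ∈ W := by
      have : b i - (α : ℝ) • v = projSpan (Set.range b \ {b i}) (b i - (α : ℝ) • v) := by
        have := hlin; rwa [sub_eq_zero] at this
      rw [this]
      exact (Submodule.orthogonalProjection W _).2
    by_cases hα0 : (α : ℝ) = 0
    · rw [hα0, zero_smul, sub_zero] at hmem
      exact hbiW hmem
    · apply hvW
      have hbi : b i ∈ Submodule.span ℝ (Set.range b) :=
        Submodule.subset_span ⟨i, rfl⟩
      have h2 : (α : ℝ) • v ∈ Submodule.span ℝ (Set.range b) := by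
        have := Submodule.sub_mem _ hbi (hWle hmem)
        simpa using this
      have := Submodule.smul_mem _ (α : ℝ)⁻¹ h2
      rwa [smul_smul, inv_mul_cancel₀ hα0, one_smul] at this
  -- span identities
  have hspanB : Submodule.span ℝ (Set.range b) = W ⊔ Submodule.span ℝ {b i} := by
    rw [hW, ← Submodule.span_union, Set.diff_union_of_subset (by simp [Set.singleton_subset_iff])]
  have hspanB' : Submodule.span ℝ ((Set.range b \ {b i}) ∪ {b i - (α : ℝ) • v}) =
      W ⊔ Submodule.span ℝ {b i - (α : ℝ) • v} := by
    rw [hW, ← Submodule.span_union]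
  have hcongr : ∀ (K K' : Submodule ℝ (EuclideanSpace ℝ (Fin (n+1)))), K = K' →
      ∀ x : EuclideanSpace ℝ (Fin (n+1)),
      ((Submodule.orthogonalProjection K x : EuclideanSpace ℝ (Fin (n+1)))) =
        ((Submodule.orthogonalProjection K' x : EuclideanSpace ℝ (Fin (n+1)))) := by
    rintro K K' rfl x; rfl
  -- squared distances
  have hd1 : (distSpan v (Set.range b))^2 = ‖v''‖^2 - ⟪v'', b''i⟫^2 / ‖b''i‖^2 := by
    unfold distSpan projSpan
    rw [hcongr _ _ hspanB v, dist_sq_sup_span W v (b i) (by rw [hb''i] at hb''ne; exact hb''ne)]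
    rw [hv'', hb''i]; unfold projSpan; rfl
  have hd2 : (distSpan v ((Set.range b \ {b i}) ∪ {b i - (α : ℝ) • v}))^2 =
      ‖v''‖^2 - ⟪v'', b''i - (α : ℝ) • v''⟫^2 / ‖b''i - (α : ℝ) • v''‖^2 := by
    unfold distSpan projSpan
    rw [hcongr _ _ hspanB' v, dist_sq_sup_span W v (b i - (α : ℝ) • v)
      (by rw [show (b i - (α : ℝ) • v) - ↑(Submodule.orthogonalProjection W (b i - (α : ℝ) • v)) =
          b''i - (α : ℝ) • v'' from hlin]; exact hb''αne)]
    rw [show (b i - (α : ℝ) • v) - ↑(Submodule.orthogonalProjection W (b i - (α : ℝ) • v)) =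
          b''i - (α : ℝ) • v'' from hlin]
    rw [hv'']; rfl
  -- the key inequality from hα at j = 0
  have h0 := hα 0
  simp only [Int.cast_zero, zero_smul, sub_zero] at h0
  have hbn : (0:ℝ) < ‖b''i‖ := norm_pos_iff.mpr hb''ne
  have hban : (0:ℝ) < ‖b''i - (α : ℝ) • v''‖ := norm_pos_iff.mpr hb''αne
  have hsq : ⟪v'', b''i - (α : ℝ) • v''⟫^2 / ‖b''i - (α : ℝ) • v''‖^2 ≤
      ⟪v'', b''i⟫^2 / ‖b''i‖^2 := by
    have h1 : (|⟪v'', b''i - (α : ℝ) • v''⟫| / ‖b''i - (α : ℝ) • v''‖)^2 ≤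
        (|⟪v'', b''i⟫| / ‖b''i‖)^2 := by
      apply pow_le_pow_left₀ (by positivity) h0 2
    rw [div_pow, div_pow, sq_abs, sq_abs] at h1
    exact h1
  have hdist : distSpan v (Set.range b) ≤
      distSpan v ((Set.range b \ {b i}) ∪ {b i - (α : ℝ) • v}) := by
    have h2 : (distSpan v (Set.range b))^2 ≤
        (distSpan v ((Set.range b \ {b i}) ∪ {b i - (α : ℝ) • v}))^2 := by
      rw [hd1, hd2]; linarith
    have hn1 : (0:ℝ) ≤ distSpan v (Set.range b) := norm_nonneg _
    have hn2 : (0:ℝ) ≤ distSpan v ((Set.range b \ {b i}) ∪ {b i - (α : ℝ) • v}) :=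
      norm_nonneg _
    nlinarith
  refine ⟨?_, hdist⟩
  have hp1 := pythagoras_projSpan (Set.range b) v
  have hp2 := pythagoras_projSpan ((Set.range b \ {b i}) ∪ {b i - (α : ℝ) • v}) v
  have h2 : (distSpan v (Set.range b))^2 ≤
      (distSpan v ((Set.range b \ {b i}) ∪ {b i - (α : ℝ) • v}))^2 := by
    rw [hd1, hd2]; linarith
  unfold distSpan at h2
  have hn1 : (0:ℝ) ≤ ‖projSpan ((Set.range b \ {b i}) ∪ {b i - (α : ℝ) • v}) v‖ := norm_nonneg _
  have hn2 : (0:ℝ) ≤ ‖projSpan (Set.range b) v‖ := norm_nonneg _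
  nlinarith
end
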